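/- arXiv:2404.12326 — 2 statements merged into one kernel-verified Lean document; each statement's English description precedes it below -/
import Mathlib

section
/- The NAP partial compositions on labelled rooted trees satisfy nested associativity: for rooted trees x on S, y on T, z on R, with s ∈ S a vertex of x and t ∈ T a vertex of y, one has (x ∘_s y) ∘_t z = x ∘_s (y ∘_t z). -/
/-- A labelled rooted tree with vertex set `supp` inside an ambient label type `V`,
given by its root and its parent function (normalized to the identity outside
`supp`, and fixing the root). -/
structure LTree (V : Type) where
  supp : Finset V
  root : V
  parent : V → V

namespace LTree

variable {V : Type} [DecidableEq V]

/-- `t` is an honest rooted tree on its vertex set `t.supp`:  the root is a vertex,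
the parent map fixes the root, sends vertices to vertices, every vertex reaches the
root by iterating the parent map (connectedness/acyclicity), and the parent map is
normalized to the identity outside the vertex set. -/
def IsTree (t : LTree V) : Prop :=
  t.root ∈ t.supp ∧ t.parent t.root = t.root ∧
    (∀ v ∈ t.supp, t.parent v ∈ t.supp ∧ ∃ n, t.parent^[n] v = t.root) ∧
    (∀ v, v ∉ t.supp → t.parent v = v)

/-- The NAP partial composition `u ∘ₛ v`: replace the vertex `s` of `u` by the tree
`v`, reconnecting each edge of `u` arriving at `s` to the root of `v`. -/
def ncomp (u : LTree V) (s : V) (v : LTree V) : LTree V where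
  supp := u.supp.erase s ∪ v.supp
  root := if u.root = s then v.root else u.root
  parent x :=
    if x ∈ u.supp.erase s then (if u.parent x = s then v.root else u.parent x)
    else if x ∈ v.supp then
      (if x = v.root then (if u.parent s = s then v.root else u.parent s) else v.parent x)
    else x

/-- Relabelling a tree along a bijection of the ambient label type. -/
def relabel (e : V ≃ V) (t : LTree V) : LTree V where
  supp := t.supp.image e
  root := e t.root
  parent x := e (t.parent (e.symm x))

/-- The single-vertex tree on the vertex `a`. -/
def eta (a : V) : LTree V := ⟨{a}, a, fun x => x⟩

/-- The edges of `u` arriving at `s`, identified with the children of `s`. -/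
def children (u : LTree V) (s : V) : Finset V :=
  (u.supp.erase s).filter (fun w => u.parent w = s)

/-- The tree `u ∘ₛᶠ v` for `f : In(s,u) → Ver(v)`: replace the vertex `s` of `u` by
the tree `v`, reconnecting each edge `a ∈ In(s,u)` to the vertex `f a` of `v`. -/
def fcomp (u : LTree V) (s : V) (v : LTree V) (f : V → V) : LTree V where
  supp := u.supp.erase s ∪ v.supp
  root := if u.root = s then v.root else u.root
  parent x :=
    if x ∈ u.supp.erase s then (if u.parent x = s then f x else u.parent x)
    else if x ∈ v.supp then
      (if x = v.root then (if u.parent s = s then v.root else u.parent s) else v.parent x)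
    else x

/-- The Pre-Lie partial composition `u ∘ₛ v := Σ_{f : In(s,u) → Ver(v)} u ∘ₛᶠ v`,
a formal linear combination of rooted trees. -/
noncomputable def plcomp (u : LTree V) (s : V) (v : LTree V) : LTree V →₀ ℚ :=
  ∑ f : {w // w ∈ children u s} → {x // x ∈ v.supp},
    Finsupp.single
      (fcomp u s v (fun w => if h : w ∈ children u s then (f ⟨w, h⟩ : V) else v.root)) 1

/-- Bilinear extension of the Pre-Lie partial composition to formal sums. -/
noncomputable def plext (x : LTree V →₀ ℚ) (s : V) (y : LTree V →₀ ℚ) : LTree V →₀ ℚ :=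
  x.sum fun t a => y.sum fun u b => (a * b) • plcomp t s u

end LTree

/-! Since `t` is not a vertex of `x`, both sides have vertex set `(X ∖ {s}) ∪ (Y ∖ {t}) ∪ Z`
and the same root. The parent maps are compared according to the tree a vertex comes from. The
substitution at `t` never redirects an edge of `x`, because the parent map of `x` stays inside
`X ∌ t`; hence an edge of `x` into `s` ends at the root of `y ∘ₜ z` on both sides, and the root
of `y` (or of `z`, when `t` is the root of `y`) inherits the parent of `s` on both sides. -/

namespace LTree

variable {V : Type}

theorem ext {a b : LTree V} (hsupp : a.supp = b.supp) (hroot : a.root = b.root)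
    (hparent : a.parent = b.parent) : a = b := by
  cases a
  cases b
  congr

theorem IsTree.root_mem {t : LTree V} (h : t.IsTree) : t.root ∈ t.supp := h.1

theorem IsTree.parent_mem {t : LTree V} (h : t.IsTree) {v : V} (hv : v ∈ t.supp) :
    t.parent v ∈ t.supp :=
  (h.2.2.1 v hv).1

variable [DecidableEq V]

section ncomp

variable {u w : LTree V} {s v : V}

@[simp]
theorem mem_ncomp_supp : v ∈ (ncomp u s w).supp ↔ (v ≠ s ∧ v ∈ u.supp) ∨ v ∈ w.supp := by
  simp [ncomp]

theorem ncomp_root : (ncomp u s w).root = if u.root = s then w.root else u.root := rfl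

theorem ncomp_parent_of_mem_left (hv : v ∈ u.supp) (hvs : v ≠ s) :
    (ncomp u s w).parent v = if u.parent v = s then w.root else u.parent v := by
  simp [ncomp, hv, hvs]

theorem ncomp_parent_of_mem_right (hv : v ∈ w.supp) (hvu : v ∉ u.supp) :
    (ncomp u s w).parent v =
      if v = w.root then (if u.parent s = s then w.root else u.parent s) else w.parent v := by
  simp [ncomp, hv, hvu]

theorem ncomp_parent_of_not_mem (hv : v ∉ (ncomp u s w).supp) : (ncomp u s w).parent v = v := by
  simp only [mem_ncomp_supp, not_or, not_and_or, not_not] at hv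
  simp only [ncomp, Finset.mem_erase]
  grind

end ncomp

section assoc

variable {x y z : LTree V} {s t : V}

theorem ncomp_ncomp_supp (ht : t ∉ x.supp) :
    (ncomp (ncomp x s y) t z).supp = (ncomp x s (ncomp y t z)).supp := by
  ext v
  simp only [mem_ncomp_supp]
  grind

theorem ncomp_ncomp_root (hxt : x.root ≠ t) :
    (ncomp (ncomp x s y) t z).root = (ncomp x s (ncomp y t z)).root := by
  simp only [ncomp_root]
  split_ifs <;> simp_all

theorem ncomp_ncomp_parent (hxy : Disjoint x.supp y.supp) (hxz : Disjoint x.supp z.supp)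
    (hyz : Disjoint y.supp z.supp) (hxp : ∀ v ∈ x.supp, x.parent v ∈ x.supp)
    (hyr : y.root ∈ y.supp) (hzr : z.root ∈ z.supp) (hs : s ∈ x.supp) (ht : t ∈ y.supp) :
    (ncomp (ncomp x s y) t z).parent = (ncomp x s (ncomp y t z)).parent := by
  have htx : t ∉ x.supp := Finset.disjoint_right.mp hxy ht
  have hpst : x.parent s ≠ t := fun h => htx (h ▸ hxp s hs)
  funext v
  by_cases hv : v ∈ (ncomp (ncomp x s y) t z).supp
  swap
  · rw [ncomp_parent_of_not_mem hv, ncomp_parent_of_not_mem (ncomp_ncomp_supp htx ▸ hv)]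
  simp only [mem_ncomp_supp] at hv
  rcases hv with ⟨hvt, ⟨hvs, hvx⟩ | hvy⟩ | hvz
  · have hpvt : x.parent v ≠ t := fun h => htx (h ▸ hxp v hvx)
    rw [ncomp_parent_of_mem_left (by simp [hvs, hvx]) hvt, ncomp_parent_of_mem_left hvx hvs,
      ncomp_parent_of_mem_left hvx hvs, ncomp_root]
    grind
  · have hvx : v ∉ x.supp := Finset.disjoint_right.mp hxy hvy
    have hvz : v ≠ z.root := fun h => Finset.disjoint_left.mp hyz hvy (h ▸ hzr)
    rw [ncomp_parent_of_mem_left (by simp [hvy]) hvt, ncomp_parent_of_mem_right hvy hvx,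
      ncomp_parent_of_mem_right (by simp [hvt, hvy]) hvx, ncomp_parent_of_mem_left hvy hvt,
      ncomp_root]
    grind
  · have hvx : v ∉ x.supp := Finset.disjoint_right.mp hxz hvz
    have hvy : v ∉ y.supp := Finset.disjoint_right.mp hyz hvz
    have hyrv : y.root ≠ v := fun h => hvy (h ▸ hyr)
    rw [ncomp_parent_of_mem_right hvz (by simp [hvy, hvx]), ncomp_parent_of_mem_right ht htx,
      ncomp_parent_of_mem_right (by simp [hvz]) hvx, ncomp_parent_of_mem_right hvz hvy,
      ncomp_root]
    grind

end assoc

end LTree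

open LTree in
/-- NAP nested associativity: for rooted trees `x`, `y`, `z` with pairwise disjoint
vertex sets, `s` a vertex of `x` and `t` a vertex of `y`,
`(x ∘ₛ y) ∘ₜ z = x ∘ₛ (y ∘ₜ z)`. -/
theorem nap_nested_assoc {V : Type} [DecidableEq V] (x y z : LTree V)
    (hx : x.IsTree) (hy : y.IsTree) (hz : z.IsTree)
    (hxy : Disjoint x.supp y.supp) (hxz : Disjoint x.supp z.supp)
    (hyz : Disjoint y.supp z.supp)
    (s t : V) (hs : s ∈ x.supp) (ht : t ∈ y.supp) :
    ncomp (ncomp x s y) t z = ncomp x s (ncomp y t z) := by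
  have htx : t ∉ x.supp := Finset.disjoint_right.mp hxy ht
  have hxt : x.root ≠ t := fun h => htx (h ▸ hx.root_mem)
  exact LTree.ext (ncomp_ncomp_supp htx) (ncomp_ncomp_root hxt)
    (ncomp_ncomp_parent hxy hxz hyz (fun _ => hx.parent_mem) hy.root_mem hz.root_mem hs ht)
end

section
/- The shuffle compositions t △_s u := Σ_{H ∈ sh(In(s,t), In(r,u))} t ∘_s^H u on the species of labelled planar rooted trees satisfy parallel associativity: (t △_s u) △_{s'} v = (t △_{s'} v) △_s u for distinct vertices s, s' of t. -/
/-- Labelled planar rooted trees over a label type `V`: a labelled root together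
with an ordered (left-to-right) list of subtrees. -/
inductive PT (V : Type) : Type
  | node : V → List (PT V) → PT V

namespace PT

variable {V : Type} [DecidableEq V]

/-- The label of the root. -/
def rootLabel : PT V → V
  | .node a _ => a

/-- The subtrees attached to the root, in their left-to-right order. -/
def rootChildren : PT V → List (PT V)
  | .node _ cs => cs

/-- The list of labels (vertices) of a planar rooted tree. -/
def labels : PT V → List V
  | .node a cs => a :: (cs.attach.map fun c => labels c.1).flatten
  decreasing_by all_goals (simp_wf; have := List.sizeOf_lt_of_mem c.2; omega)

/-- Relabel a planar rooted tree along a map of labels. -/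
def mapL (f : V → V) : PT V → PT V
  | .node a cs => .node (f a) (cs.attach.map fun c => mapL f c.1)
  decreasing_by all_goals (simp_wf; have := List.sizeOf_lt_of_mem c.2; omega)

/-- The magmatic partial composition `t ∘ₛ u`: replace the vertex `s` of `t` by the
tree `u`, attaching the branches of `In(s,t)` at the root of `u` to the right of
(i.e. after) the already present branches `In(root u, u)`. -/
def comp : PT V → V → PT V → PT V
  | .node a cs, s, u =>
    if a = s then .node u.rootLabel (u.rootChildren ++ cs)
    else .node a (cs.attach.map fun c => comp c.1 s u)
  decreasing_by all_goals (simp_wf; have := List.sizeOf_lt_of_mem c.2; omega)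

/-- All shuffles (interleavings preserving the order of each argument) of two lists. -/
def shuffles : List α → List α → List (List α)
  | [], ys => [ys]
  | x :: xs, [] => [x :: xs]
  | x :: xs, y :: ys =>
      (shuffles xs (y :: ys)).map (x :: ·) ++ (shuffles (x :: xs) ys).map (y :: ·)
  termination_by xs ys => xs.length + ys.length

/-- All shuffles of three lists. -/
def shuffles3 : List α → List α → List α → List (List α)
  | [], ys, zs => shuffles ys zs
  | x :: xs, [], zs => shuffles (x :: xs) zs
  | x :: xs, y :: ys, [] => shuffles (x :: xs) (y :: ys)
  | x :: xs, y :: ys, z :: zs =>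
      (shuffles3 xs (y :: ys) (z :: zs)).map (x :: ·) ++
        (shuffles3 (x :: xs) ys (z :: zs)).map (y :: ·) ++
          (shuffles3 (x :: xs) (y :: ys) zs).map (z :: ·)
  termination_by xs ys zs => xs.length + ys.length + zs.length

/-- The list of all trees `t ∘ₛᴴ u`, where `H` runs over the shuffles of the ordered
sets `In(root u, u)` and `In(s,t)`: the vertex `s` of `t` is replaced by `u` and the
branches of `In(s,t)` and `In(root u, u)` are attached at the root of `u` in the
left-to-right order prescribed by `H`. -/
def scomp : PT V → V → PT V → List (PT V)
  | .node a cs, s, u =>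
    if a = s then (shuffles u.rootChildren cs).map (fun l => .node u.rootLabel l)
    else (List.sections (cs.attach.map fun c => scomp c.1 s u)).map (fun l => .node a l)
  decreasing_by all_goals (simp_wf; have := List.sizeOf_lt_of_mem c.2; omega)

/-- The shuffle (magmatic) partial composition `t △ₛ u := Σ_H t ∘ₛᴴ u`, a formal
linear combination of planar rooted trees. -/
noncomputable def tri (t : PT V) (s : V) (u : PT V) : PT V →₀ ℚ :=
  ((scomp t s u).map fun r => Finsupp.single r (1 : ℚ)).sum

/-- Bilinear extension of `△ₛ` to formal sums of planar rooted trees. -/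
noncomputable def triext (x : PT V →₀ ℚ) (s : V) (y : PT V →₀ ℚ) : PT V →₀ ℚ :=
  x.sum fun t a => y.sum fun u b => (a * b) • tri t s u

/-- Replace the full subtree at the vertex labelled `s` by the tree `w`. -/
def setAt : PT V → V → PT V → PT V
  | .node a cs, s, w =>
    if a = s then w else .node a (cs.attach.map fun c => setAt c.1 s w)
  decreasing_by all_goals (simp_wf; have := List.sizeOf_lt_of_mem c.2; omega)

/-- The ordered list of branches arriving at the vertex labelled `s`. -/
def childrenAt : PT V → V → List (PT V)
  | .node a cs, s =>
    if a = s then cs else (cs.attach.map fun c => childrenAt c.1 s).flatten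
  decreasing_by all_goals (simp_wf; have := List.sizeOf_lt_of_mem c.2; omega)

end PT

namespace PT

variable {V : Type} [DecidableEq V]

lemma labels_node (a : V) (cs : List (PT V)) :
    labels (node a cs) = a :: (cs.map labels).flatten := by
  rw [labels, List.attach_map_val]

lemma scomp_node_root (s : V) (cs : List (PT V)) (u : PT V) :
    scomp (node s cs) s u =
      (shuffles u.rootChildren cs).map (fun l => node u.rootLabel l) := by
  rw [scomp, if_pos rfl]

lemma scomp_node_ne {a s : V} (h : a ≠ s) (cs : List (PT V)) (u : PT V) :
    scomp (node a cs) s u =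
      (List.sections (cs.map fun c => scomp c s u)).map (fun l => node a l) := by
  rw [scomp, if_neg h]
  congr 2
  exact List.attach_map_val (l := cs) (f := fun c => scomp c s u)

lemma rootLabel_mem_labels (t : PT V) : rootLabel t ∈ labels t := by
  cases t with
  | node a cs => rw [labels_node]; exact List.mem_cons_self

lemma labels_child_subset {c : PT V} {a : V} {cs : List (PT V)} (hc : c ∈ cs) :
    ∀ x ∈ labels c, x ∈ labels (node a cs) := by
  intro x hx
  rw [labels_node]
  exact List.mem_cons_of_mem _ (List.mem_flatten.2 ⟨labels c, List.mem_map_of_mem hc, hx⟩)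

lemma sections_map_singleton (cs : List α) :
    List.sections (cs.map fun c => [c]) = [cs] := by
  induction cs with
  | nil => rfl
  | cons c cs ih => simp [List.sections, ih]

lemma scomp_of_not_mem : ∀ (t : PT V) (s : V), s ∉ labels t → ∀ u, scomp t s u = [t]
  | node a cs, s, h, u => by
    have ha : a ≠ s := by
      rw [labels_node] at h; intro he; exact h (he ▸ List.mem_cons_self)
    rw [scomp_node_ne ha]
    have hcs : cs.map (fun c => scomp c s u) = cs.map (fun c => [c]) := by
      apply List.map_congr_left
      intro c hc
      exact scomp_of_not_mem c s (fun hm => h (labels_child_subset hc s hm)) u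
    rw [hcs, sections_map_singleton]
    rfl
  termination_by t => sizeOf t
  decreasing_by have := List.sizeOf_lt_of_mem hc; simp; omega

lemma shuffles_perm : ∀ {xs ys l : List α}, l ∈ shuffles xs ys → l.Perm (xs ++ ys)
  | [], ys, l, h => by
    rw [shuffles] at h; simp at h; simp [h]
  | x :: xs, [], l, h => by
    rw [shuffles] at h; simp at h; simp [h]
  | x :: xs, y :: ys, l, h => by
    rw [shuffles] at h
    rcases List.mem_append.1 h with h' | h' <;> rcases List.mem_map.1 h' with ⟨m, hm, rfl⟩
    · exact (shuffles_perm hm).cons x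
    · have h1 : (y :: m).Perm (y :: (x :: xs ++ ys)) := (shuffles_perm hm).cons y
      have h2 : (y :: (x :: xs ++ ys)).Perm (x :: xs ++ y :: ys) :=
        (List.perm_middle (a := y) (l₁ := x :: xs) (l₂ := ys)).symm
      exact h1.trans h2
  termination_by xs ys => xs.length + ys.length

lemma forall₂_mem_exists {R : α → β → Prop} :
    ∀ {l : List α} {m : List β}, List.Forall₂ R l m → ∀ a ∈ l, ∃ b ∈ m, R a b := by
  intro l m h
  induction h with
  | nil => intro a ha; cases ha
  | cons hr _ ih =>
    intro a ha
    rcases List.mem_cons.1 ha with rfl | ha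
    · exact ⟨_, List.mem_cons_self, hr⟩
    · rcases ih a ha with ⟨b, hb, hab⟩
      exact ⟨b, List.mem_cons_of_mem _ hb, hab⟩

lemma mem_labels_scomp :
    ∀ (t : PT V) (s : V) (u w : PT V), w ∈ scomp t s u →
      ∀ x ∈ labels w, x ∈ labels t ∨ x ∈ labels u
  | node a cs, s, u, w, hw, x, hx => by
    by_cases has : a = s
    · subst has
      rw [scomp_node_root] at hw
      rcases List.mem_map.1 hw with ⟨l, hl, rfl⟩
      rw [labels_node] at hx
      rcases List.mem_cons.1 hx with rfl | hx
      · exact Or.inr (rootLabel_mem_labels u)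
      · rcases List.mem_flatten.1 hx with ⟨L, hL, hxL⟩
        rcases List.mem_map.1 hL with ⟨c, hc, rfl⟩
        have hc' : c ∈ u.rootChildren ++ cs := (shuffles_perm hl).subset hc
        rcases List.mem_append.1 hc' with hc' | hc'
        · right
          cases u with
          | node b ds => exact labels_child_subset hc' x hxL
        · exact Or.inl (labels_child_subset hc' x hxL)
    · rw [scomp_node_ne has] at hw
      rcases List.mem_map.1 hw with ⟨l, hl, rfl⟩
      rw [labels_node] at hx
      rcases List.mem_cons.1 hx with rfl | hx
      · exact Or.inl (by rw [labels_node]; exact List.mem_cons_self)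
      · rcases List.mem_flatten.1 hx with ⟨L, hL, hxL⟩
        rcases List.mem_map.1 hL with ⟨c', hc', rfl⟩
        have := forall₂_mem_exists (List.mem_sections.1 hl) c' hc'
        rcases this with ⟨L', hL', hc'L'⟩
        rcases List.mem_map.1 hL' with ⟨c, hc, rfl⟩
        rcases mem_labels_scomp c s u c' hc'L' x hxL with h | h
        · exact Or.inl (labels_child_subset hc x h)
        · exact Or.inr h
  termination_by t => sizeOf t
  decreasing_by have := List.sizeOf_lt_of_mem hc; simp; omega

open Multiset in
lemma coe_sections_cons (L : List α) (M : List (List α)) :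
    ((List.sections (L :: M) : List (List α)) : Multiset (List α)) =
      (↑L : Multiset α).bind fun x =>
        ((List.sections M : List (List α)) : Multiset (List α)).map (x :: ·) := by
  show ((((List.sections M).flatMap fun s => L.map fun a => a :: s : List (List α))) : Multiset (List α)) = _
  rw [← Multiset.coe_bind]
  have h1 : ∀ s : List α, ((L.map fun a => a :: s : List (List α)) : Multiset (List α)) =
      (↑L : Multiset α).bind fun x => ({x :: s} : Multiset (List α)) := by
    intro s; rw [Multiset.bind_singleton]; rfl
  simp only [h1]
  rw [Multiset.bind_bind]
  simp only [Multiset.bind_singleton]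

lemma coe_list_map {β γ : Type _} (f : β → γ) (l : List β) :
    ((l.map f : List γ) : Multiset γ) = (↑l : Multiset β).map f := rfl

lemma shuffles_nil_left (ys : List α) : shuffles [] ys = [ys] := by rw [shuffles]

lemma shuffles_nil_right (xs : List α) : shuffles xs [] = [xs] := by
  cases xs with
  | nil => rw [shuffles]
  | cons x xs => rw [shuffles]

lemma shuffles_cons_cons (x : α) (xs : List α) (y : α) (ys : List α) :
    shuffles (x :: xs) (y :: ys) =
      (shuffles xs (y :: ys)).map (x :: ·) ++ (shuffles (x :: xs) ys).map (y :: ·) := by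
  rw [shuffles]

lemma shsec (g : α → List α) :
    ∀ (xs ys : List α), (∀ c ∈ xs, g c = [c]) →
      ((shuffles xs ys : List (List α)) : Multiset (List α)).bind
          (fun l => ((List.sections (l.map g) : List (List α)) : Multiset (List α))) =
        ((List.sections (ys.map g) : List (List α)) : Multiset (List α)).bind
          (fun m => ((shuffles xs m : List (List α)) : Multiset (List α)))
  | xs, [], hg => by
    simp [shuffles_nil_right, List.map_congr_left hg, sections_map_singleton]
  | [], y :: ys, hg => by
    rw [shuffles_nil_left, Multiset.coe_singleton, Multiset.singleton_bind]
    have e : (fun m : List α => ((shuffles [] m : List (List α)) : Multiset (List α))) =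
        fun m => {m} := by
      funext m; rw [shuffles_nil_left, Multiset.coe_singleton]
    rw [e]
    exact ((Multiset.bind_singleton _ (id : List α → List α)).trans (Multiset.map_id _)).symm
  | x :: xs, y :: ys, hg => by
    have hgx : g x = [x] := hg x (List.mem_cons_self)
    have hg' : ∀ c ∈ xs, g c = [c] := fun c hc => hg c (List.mem_cons_of_mem _ hc)
    have IH1 := shsec g xs (y :: ys) hg'
    have IH2 := shsec g (x :: xs) ys hg
    have e1 : ∀ l : List α,
        ((List.sections ((x :: l).map g) : List (List α)) : Multiset (List α)) =
          ((List.sections (l.map g) : List (List α)) : Multiset (List α)).map (x :: ·) := by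
      intro l
      rw [List.map_cons, hgx, coe_sections_cons, Multiset.coe_singleton,
        Multiset.singleton_bind]
    have e2 : ∀ l : List α,
        ((List.sections ((y :: l).map g) : List (List α)) : Multiset (List α)) =
          ((g y : List α) : Multiset α).bind fun z =>
            ((List.sections (l.map g) : List (List α)) : Multiset (List α)).map (z :: ·) := by
      intro l; rw [List.map_cons, coe_sections_cons]
    calc ((shuffles (x :: xs) (y :: ys) : List (List α)) : Multiset (List α)).bind
          (fun l => ((List.sections (l.map g) : List (List α)) : Multiset (List α)))
        = (((shuffles xs (y :: ys) : List (List α)) : Multiset (List α)).map (x :: ·)).bind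
            (fun l => ((List.sections (l.map g) : List (List α)) : Multiset (List α))) +
          (((shuffles (x :: xs) ys : List (List α)) : Multiset (List α)).map (y :: ·)).bind
            (fun l => ((List.sections (l.map g) : List (List α)) : Multiset (List α))) := by
          rw [shuffles_cons_cons, ← Multiset.coe_add, Multiset.add_bind,
            coe_list_map, coe_list_map]
      _ = (((shuffles xs (y :: ys) : List (List α)) : Multiset (List α)).bind
            (fun l => ((List.sections (l.map g) : List (List α)) : Multiset (List α)))).map (x :: ·) +
          ((g y : List α) : Multiset α).bind (fun z =>
            (((shuffles (x :: xs) ys : List (List α)) : Multiset (List α)).bind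
              (fun l => ((List.sections (l.map g) : List (List α)) : Multiset (List α)))).map (z :: ·)) := by
          rw [Multiset.bind_map, Multiset.bind_map]
          simp only [e1, e2]
          rw [← Multiset.map_bind, Multiset.bind_bind]
          congr 1
          apply Multiset.bind_congr
          intro z _
          rw [← Multiset.map_bind]
      _ = (((List.sections ((y :: ys).map g) : List (List α)) : Multiset (List α)).bind
            (fun m => ((shuffles xs m : List (List α)) : Multiset (List α)))).map (x :: ·) +
          ((g y : List α) : Multiset α).bind (fun z =>
            (((List.sections (ys.map g) : List (List α)) : Multiset (List α)).bind
              (fun m => ((shuffles (x :: xs) m : List (List α)) : Multiset (List α)))).map (z :: ·)) := by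
          rw [IH1, IH2]
      _ = ((List.sections ((y :: ys).map g) : List (List α)) : Multiset (List α)).bind
            (fun m => ((shuffles (x :: xs) m : List (List α)) : Multiset (List α))) := by
          have e3 : ∀ (z : α) (m : List α),
              ((shuffles (x :: xs) (z :: m) : List (List α)) : Multiset (List α)) =
                ((shuffles xs (z :: m) : List (List α)) : Multiset (List α)).map (x :: ·) +
                  ((shuffles (x :: xs) m : List (List α)) : Multiset (List α)).map (z :: ·) := by
            intro z m
            rw [shuffles_cons_cons, ← Multiset.coe_add, coe_list_map, coe_list_map]
          rw [List.map_cons, coe_sections_cons]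
          simp only [Multiset.bind_assoc, Multiset.bind_map, Multiset.map_bind, e3,
            Multiset.bind_add]
  termination_by xs ys => xs.length + ys.length

lemma secsec {β : Type _} (f g : β → List β) :
    ∀ cs : List β,
      ((List.sections (cs.map f) : List (List β)) : Multiset (List β)).bind
          (fun l => ((List.sections (l.map g) : List (List β)) : Multiset (List β))) =
        ((List.sections (cs.map fun c => (f c).flatMap g) : List (List β)) :
          Multiset (List β))
  | [] => by simp
  | c :: cs => by
    have IH := secsec f g cs
    rw [List.map_cons, coe_sections_cons, List.map_cons, coe_sections_cons,
      Multiset.bind_assoc, ← Multiset.coe_bind, Multiset.bind_assoc]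
    apply Multiset.bind_congr
    intro x _
    rw [Multiset.bind_map]
    have e : ∀ l : List β,
        ((List.sections ((x :: l).map g) : List (List β)) : Multiset (List β)) =
          ((g x : List β) : Multiset β).bind fun y =>
            ((List.sections (l.map g) : List (List β)) : Multiset (List β)).map (y :: ·) := by
      intro l; rw [List.map_cons, coe_sections_cons]
    simp only [e]
    rw [Multiset.bind_bind]
    apply Multiset.bind_congr
    intro y _
    rw [← Multiset.map_bind, IH]

lemma seccongr {β γ : Type _} (F G : β → List γ) :
    ∀ (cs : List β), (∀ c ∈ cs, ((F c : List γ) : Multiset γ) = ↑(G c)) →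
      ((List.sections (cs.map F) : List (List γ)) : Multiset (List γ)) =
        ↑(List.sections (cs.map G))
  | [], _ => rfl
  | c :: cs, h => by
    rw [List.map_cons, coe_sections_cons, List.map_cons, coe_sections_cons,
      h c (List.mem_cons_self),
      seccongr F G cs (fun c hc => h c (List.mem_cons_of_mem _ hc))]

lemma key_root (cs : List (PT V)) (s s' : V) (u v : PT V)
    (hss' : s ≠ s') (hs'u : s' ∉ labels u) :
    ((scomp (node s cs) s u : List (PT V)) : Multiset (PT V)).bind
        (fun r => ((scomp r s' v : List (PT V)) : Multiset (PT V))) =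
      ((scomp (node s cs) s' v : List (PT V)) : Multiset (PT V)).bind
        (fun r => ((scomp r s u : List (PT V)) : Multiset (PT V))) := by
  have hρ : u.rootLabel ≠ s' := fun h => hs'u (h ▸ rootLabel_mem_labels u)
  have hg : ∀ c ∈ u.rootChildren, scomp c s' v = [c] := by
    intro c hc
    apply scomp_of_not_mem
    intro hm
    apply hs'u
    cases u with
    | node b ds => exact labels_child_subset hc s' hm
  rw [scomp_node_root, scomp_node_ne hss']
  rw [coe_list_map, Multiset.bind_map, coe_list_map, Multiset.bind_map]
  have e1 : ∀ l : List (PT V),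
      ((scomp (node u.rootLabel l) s' v : List (PT V)) : Multiset (PT V)) =
        ((List.sections (l.map fun c => scomp c s' v) : List (List (PT V))) :
          Multiset (List (PT V))).map (fun l => node u.rootLabel l) := by
    intro l; rw [scomp_node_ne hρ, coe_list_map]
  have e2 : ∀ m : List (PT V),
      ((scomp (node s m) s u : List (PT V)) : Multiset (PT V)) =
        ((shuffles u.rootChildren m : List (List (PT V))) :
          Multiset (List (PT V))).map (fun l => node u.rootLabel l) := by
    intro m; rw [scomp_node_root, coe_list_map]
  simp only [e1, e2]
  rw [← Multiset.map_bind, ← Multiset.map_bind]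
  congr 1
  exact shsec (fun c => scomp c s' v) u.rootChildren cs hg

lemma key : ∀ (t : PT V) (s s' : V) (u v : PT V), s ≠ s' →
    s ∉ labels v → s' ∉ labels u →
    ((scomp t s u : List (PT V)) : Multiset (PT V)).bind
        (fun r => ((scomp r s' v : List (PT V)) : Multiset (PT V))) =
      ((scomp t s' v : List (PT V)) : Multiset (PT V)).bind
        (fun r => ((scomp r s u : List (PT V)) : Multiset (PT V)))
  | node a cs, s, s', u, v, hss', hsv, hs'u => by
    by_cases has : a = s
    · subst has; exact key_root cs _ _ u v hss' hs'u
    · by_cases has' : a = s'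
      · subst has'; exact (key_root cs _ _ v u (Ne.symm hss') hsv).symm
      · rw [scomp_node_ne has, scomp_node_ne has']
        rw [coe_list_map, Multiset.bind_map, coe_list_map, Multiset.bind_map]
        have e1 : ∀ l : List (PT V),
            ((scomp (node a l) s' v : List (PT V)) : Multiset (PT V)) =
              ((List.sections (l.map fun c => scomp c s' v) : List (List (PT V))) :
                Multiset (List (PT V))).map (fun l => node a l) := by
          intro l; rw [scomp_node_ne has', coe_list_map]
        have e2 : ∀ l : List (PT V),
            ((scomp (node a l) s u : List (PT V)) : Multiset (PT V)) =
              ((List.sections (l.map fun c => scomp c s u) : List (List (PT V))) :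
                Multiset (List (PT V))).map (fun l => node a l) := by
          intro l; rw [scomp_node_ne has, coe_list_map]
        simp only [e1, e2]
        rw [← Multiset.map_bind, ← Multiset.map_bind]
        congr 1
        rw [secsec (fun c => scomp c s u) (fun c => scomp c s' v) cs,
          secsec (fun c => scomp c s' v) (fun c => scomp c s u) cs]
        apply seccongr
        intro c hc
        rw [← Multiset.coe_bind, ← Multiset.coe_bind]
        exact key c s s' u v hss' hsv hs'u
  termination_by t => sizeOf t
  decreasing_by have := List.sizeOf_lt_of_mem hc; simp; omega

lemma triext_add_left (x y z : PT V →₀ ℚ) (s : V) :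
    triext (x + y) s z = triext x s z + triext y s z := by
  unfold triext
  rw [Finsupp.sum_add_index']
  · intro t
    simp
  · intro t a b
    rw [← Finsupp.sum_add]
    congr 1
    funext w c
    rw [add_mul, add_smul]

lemma triext_single_left (r : PT V) (s : V) (v : PT V) :
    triext (Finsupp.single r (1 : ℚ)) s (Finsupp.single v (1 : ℚ)) = tri r s v := by
  unfold triext
  rw [Finsupp.sum_single_index]
  · rw [Finsupp.sum_single_index]
    · simp
    · simp
  · simp

lemma tri_def (t : PT V) (s : V) (u : PT V) :
    tri t s u = ((scomp t s u).map fun r => Finsupp.single r (1 : ℚ)).sum := rfl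

lemma triext_listsum (L : List (PT V)) (s : V) (v : PT V) :
    triext ((L.map fun r => Finsupp.single r (1 : ℚ)).sum) s (Finsupp.single v 1) =
      ((L.flatMap fun r => scomp r s v).map fun w => Finsupp.single w (1 : ℚ)).sum := by
  induction L with
  | nil => simp [triext]
  | cons r L ih =>
    rw [List.map_cons, List.sum_cons, triext_add_left, ih, triext_single_left,
      List.flatMap_cons, List.map_append, List.sum_append, tri_def]

end PT


open PT in
/-- Parallel associativity of the shuffle compositions
`t △ₛ u := Σ_{H ∈ sh(In(s,t), In(r,u))} t ∘ₛᴴ u` on labelled planar rooted trees: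
for distinct vertices `s`, `s'` of `t`, `(t △ₛ u) △ₛ' v = (t △ₛ' v) △ₛ u`. -/
theorem mag_shuffle_parallel_assoc {V : Type} [DecidableEq V] (t u v : PT V)
    (ht : t.labels.Nodup) (hu : u.labels.Nodup) (hv : v.labels.Nodup)
    (htu : ∀ a ∈ t.labels, a ∉ u.labels) (htv : ∀ a ∈ t.labels, a ∉ v.labels)
    (huv : ∀ a ∈ u.labels, a ∉ v.labels)
    (s s' : V) (hs : s ∈ t.labels) (hs' : s' ∈ t.labels) (hss' : s ≠ s') :
    triext (tri t s u) s' (Finsupp.single v 1) =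
      triext (tri t s' v) s (Finsupp.single u 1) := by
  have hperm : ((scomp t s u).flatMap fun r => scomp r s' v).Perm
      ((scomp t s' v).flatMap fun r => scomp r s u) := by
    apply Multiset.coe_eq_coe.1
    rw [← Multiset.coe_bind, ← Multiset.coe_bind]
    exact key t s s' u v hss' (htv s hs) (htu s' hs')
  rw [tri_def, triext_listsum, tri_def, triext_listsum]
  exact (hperm.map _).sum_eq
end
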